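/- arXiv:1210.7315 — 2 statements merged into one kernel-verified Lean document; each statement's English description precedes it below -/
import Mathlib

section
/- Every linear forest in K_n (a subgraph all of whose connected components are paths) with n ≥ 3 vertices available is contained in some Hamiltonian cycle of K_n. -/
/-!
Enlarge `F` to a maximal linear forest. It is connected: otherwise an edge joining endpoints
(vertices of degree at most one) of two different components would give a larger linear forest.
A connected linear forest on at least three vertices is a tree with all degrees in `{1, 2}`, so by
the handshake lemma it has exactly two endpoints; they are not adjacent, and joining them closes a
Hamiltonian cycle.
-/

/-- A Hamiltonian cycle of `K_n`, viewed as a (sub)graph on the vertex set `Fin n`: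
a connected, 2-regular simple graph. -/
def IsHamCycle {n : ℕ} (G : SimpleGraph (Fin n)) : Prop :=
  G.Connected ∧ ∀ v : Fin n, (G.neighborSet v).ncard = 2

namespace SimpleGraph

variable {V : Type*} {G : SimpleGraph V}

def IsLinearForest (G : SimpleGraph V) : Prop :=
  G.IsAcyclic ∧ ∀ v, (G.neighborSet v).ncard ≤ 2

lemma ncard_neighborSet_eq_degree (G : SimpleGraph V) (v : V) [Fintype (G.neighborSet v)] :
    (G.neighborSet v).ncard = G.degree v := by
  rw [Set.ncard_eq_toFinset_card', Set.toFinset_card, card_neighborSet_eq_degree]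

lemma neighborSet_sup_edge_of_ne {u v w : V} (hwu : w ≠ u) (hwv : w ≠ v) :
    (G ⊔ edge u v).neighborSet w = G.neighborSet w := by
  ext x
  simp [edge_adj, hwu, hwv]

section Finite

variable [Finite V]

lemma ncard_neighborSet_sup_edge_left {u v : V} (hne : u ≠ v) (hnadj : ¬G.Adj u v) :
    ((G ⊔ edge u v).neighborSet u).ncard = (G.neighborSet u).ncard + 1 := by
  have : (G ⊔ edge u v).neighborSet u = insert v (G.neighborSet u) := by
    ext x
    simp only [mem_neighborSet, sup_adj, edge_adj, Set.mem_insert_iff]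
    grind
  rw [this, Set.ncard_insert_of_notMem (show v ∉ G.neighborSet u from hnadj)]

lemma ncard_neighborSet_sup_edge_right {u v : V} (hne : u ≠ v) (hnadj : ¬G.Adj u v) :
    ((G ⊔ edge u v).neighborSet v).ncard = (G.neighborSet v).ncard + 1 := by
  rw [edge_comm]
  exact ncard_neighborSet_sup_edge_left hne.symm (hnadj ∘ Adj.symm)

/-- The far end of a longest path ending at `x` is a leaf (or an isolated vertex). -/
lemma IsAcyclic.exists_reachable_ncard_neighborSet_le_one (hG : G.IsAcyclic) (x : V) :
    ∃ y, G.Reachable x y ∧ (G.neighborSet y).ncard ≤ 1 := by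
  have := Fintype.ofFinite V
  have hfin : {k | ∃ (y : V) (p : G.Walk y x), p.IsPath ∧ p.length = k}.Finite :=
    (Set.finite_Iio (Fintype.card V)).subset fun _ ⟨_, _, hp, hk⟩ ↦ hk ▸ hp.length_lt
  obtain ⟨_, ⟨y, p, hp, rfl⟩, hmax⟩ := hfin.exists_maximal ⟨0, x, .nil, .nil, rfl⟩
  refine ⟨y, ⟨p.reverse⟩, ?_⟩
  have hnbr : G.neighborSet y ⊆ {p.snd} := fun w hw ↦ by
    have hw_supp : w ∈ p.support := by
      by_contra hw'
      have := hmax ⟨w, .cons hw.symm p, hp.cons hw', rfl⟩ (by simp)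
      simp at this
    exact hG.eq_snd_of_adj_start hp hw hw_supp
  exact (Set.ncard_le_ncard hnbr).trans (Set.ncard_singleton _).le

lemma IsLinearForest.sup_edge {u v : V} (hG : G.IsLinearForest) (huv : ¬G.Reachable u v)
    (hu : (G.neighborSet u).ncard ≤ 1) (hv : (G.neighborSet v).ncard ≤ 1) :
    (G ⊔ edge u v).IsLinearForest := by
  have hne : u ≠ v := by rintro rfl; exact huv .rfl
  have hnadj : ¬G.Adj u v := fun h ↦ huv h.reachable
  refine ⟨hG.1.sup_edge_of_not_reachable huv, fun w ↦ ?_⟩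
  obtain rfl | hwu := eq_or_ne w u
  · rw [ncard_neighborSet_sup_edge_left hne hnadj]
    omega
  obtain rfl | hwv := eq_or_ne w v
  · rw [ncard_neighborSet_sup_edge_right hne hnadj]
    omega
  rw [neighborSet_sup_edge_of_ne hwu hwv]
  exact hG.2 w

lemma connected_of_maximal_isLinearForest [Nonempty V] (h : Maximal IsLinearForest G) :
    G.Connected := by
  refine (connected_iff G).2 ⟨fun a b ↦ ?_, ‹_›⟩
  by_contra hab
  obtain ⟨u, hau, hu⟩ := h.prop.1.exists_reachable_ncard_neighborSet_le_one a
  obtain ⟨v, hbv, hv⟩ := h.prop.1.exists_reachable_ncard_neighborSet_le_one b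
  have huv : ¬G.Reachable u v := fun huv ↦ hab (hau.trans (huv.trans hbv.symm))
  have hne : u ≠ v := by rintro rfl; exact huv .rfl
  have hle : G ⊔ edge u v ≤ G := h.2 (h.prop.sup_edge huv hu hv) le_sup_left
  exact huv (hle (Or.inr (by simp [edge_adj, hne]))).reachable

/-- An edge between two leaves is a whole connected component. -/
lemma Connected.not_adj_of_ncard_neighborSet_le_one (hG : G.Connected) {u v w : V}
    (hwu : w ≠ u) (hwv : w ≠ v) (hu : (G.neighborSet u).ncard ≤ 1)
    (hv : (G.neighborSet v).ncard ≤ 1) : ¬G.Adj u v := by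
  intro huv
  obtain ⟨d, -, hd_in, hd_out⟩ :=
    (hG.preconnected u w).some.exists_boundary_dart {u, v} (by simp) (by simp [hwu, hwv])
  have hadj := d.adj
  rcases hd_in with h | h <;> rw [h] at hadj
  · exact hd_out (Or.inr ((Set.ncard_le_one_iff).1 hu hadj huv))
  · exact hd_out (Or.inl ((Set.ncard_le_one_iff).1 hv hadj huv.symm))

end Finite

lemma IsTree.exists_leaves_of_ncard_neighborSet_le_two [Fintype V] [Nontrivial V]
    (hG : G.IsTree) (hdeg : ∀ v, (G.neighborSet v).ncard ≤ 2) :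
    ∃ u v, u ≠ v ∧ (G.neighborSet u).ncard = 1 ∧ (G.neighborSet v).ncard = 1 ∧
      ∀ w, w ≠ u → w ≠ v → (G.neighborSet w).ncard = 2 := by
  classical
  simp only [ncard_neighborSet_eq_degree] at hdeg ⊢
  have hpos (v : V) : 0 < G.degree v := hG.connected.preconnected.degree_pos_of_nontrivial v
  set A := Finset.univ.filter fun v ↦ G.degree v = 1
  have hA : A.card = 2 := by
    have hsum : ∑ v, G.degree v + A.card = 2 * Fintype.card V := by
      calc ∑ v, G.degree v + A.card = ∑ v, (G.degree v + if G.degree v = 1 then 1 else 0) := by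
            rw [Finset.sum_add_distrib, Finset.sum_boole, Nat.cast_id]
        _ = ∑ _ : V, 2 := Finset.sum_congr rfl fun v _ ↦ by
            have := hdeg v; have := hpos v; split_ifs <;> omega
        _ = 2 * Fintype.card V := by simp [mul_comm]
    have := hG.card_edgeFinset
    rw [sum_degrees_eq_twice_card_edges] at hsum
    omega
  obtain ⟨u, v, hne, huv⟩ := Finset.card_eq_two.1 hA
  have hmem (w : V) : G.degree w = 1 ↔ w = u ∨ w = v := by
    simpa [A] using congrArg (w ∈ ·) huv
  refine ⟨u, v, hne, (hmem u).2 (.inl rfl), (hmem v).2 (.inr rfl), fun w hwu hwv ↦ ?_⟩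
  have := hdeg w; have := hpos w; have := (hmem w).not.2 (by tauto)
  omega

lemma IsLinearForest.exists_connected_two_regular_le_of_connected [Fintype V]
    (hV : 3 ≤ Fintype.card V) (hF : G.IsLinearForest) (hconn : G.Connected) :
    ∃ H : SimpleGraph V, H.Connected ∧ (∀ v, (H.neighborSet v).ncard = 2) ∧ G ≤ H := by
  classical
  have : Nontrivial V := Fintype.one_lt_card_iff_nontrivial.1 (by omega)
  obtain ⟨u, v, hne, hu, hv, hdeg⟩ :=
    IsTree.exists_leaves_of_ncard_neighborSet_le_two ⟨hconn, hF.1⟩ hF.2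
  have hcard : ({u, v} : Finset V).card < (Finset.univ : Finset V).card :=
    Finset.card_le_two.trans_lt (by rw [Finset.card_univ]; omega)
  obtain ⟨w, -, hw⟩ := Finset.exists_mem_notMem_of_card_lt_card hcard
  have hwu : w ≠ u := fun h ↦ hw (by simp [h])
  have hwv : w ≠ v := fun h ↦ hw (by simp [h])
  have hnadj := hconn.not_adj_of_ncard_neighborSet_le_one hwu hwv hu.le hv.le
  refine ⟨G ⊔ edge u v, hconn.mono le_sup_left, fun x ↦ ?_, le_sup_left⟩
  obtain rfl | hxu := eq_or_ne x u
  · rw [ncard_neighborSet_sup_edge_left hne hnadj, hu]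
  obtain rfl | hxv := eq_or_ne x v
  · rw [ncard_neighborSet_sup_edge_right hne hnadj, hv]
  rw [neighborSet_sup_edge_of_ne hxu hxv, hdeg x hxu hxv]

end SimpleGraph

/-- Every linear forest in `K_n` (an acyclic subgraph with all degrees `≤ 2`),
`n ≥ 3`, is contained in some Hamiltonian cycle. -/
theorem linearForest_extends_to_hamCycle (n : ℕ) (hn : 3 ≤ n)
    (F : SimpleGraph (Fin n)) (hAcyclic : F.IsAcyclic)
    (hDeg : ∀ v : Fin n, (F.neighborSet v).ncard ≤ 2) :
    ∃ G : SimpleGraph (Fin n), IsHamCycle G ∧ F ≤ G := by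
  have : Nonempty (Fin n) := ⟨⟨0, by omega⟩⟩
  obtain ⟨F', hFF', hmax⟩ :=
    Finite.exists_le_maximal (p := SimpleGraph.IsLinearForest) ⟨hAcyclic, hDeg⟩
  obtain ⟨G, hGconn, hGdeg, hF'G⟩ := hmax.prop.exists_connected_two_regular_le_of_connected
    (by simpa using hn) (SimpleGraph.connected_of_maximal_isLinearForest hmax)
  exact ⟨G, ⟨hGconn, hGdeg⟩, hFF'.trans hF'G⟩
end

section
/- For n ≥ 5 and any matching M of size k in K_n (with 2k ≤ n and k ≥ 1), the number of Hamiltonian cycles of K_n containing all edges of M equals 2^{k-1}·(n-k-1)!. -/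
open Equiv Finset
open scoped Nat

namespace Equiv.Perm

variable {V : Type*}

def toSimpleGraph (σ : Perm V) : SimpleGraph V :=
  SimpleGraph.fromRel fun x y => σ x = y

theorem toSimpleGraph_adj {σ : Perm V} {x y : V} :
    σ.toSimpleGraph.Adj x y ↔ x ≠ y ∧ (σ x = y ∨ σ y = x) :=
  SimpleGraph.fromRel_adj _ _ _

instance [DecidableEq V] (σ : Perm V) : DecidableRel σ.toSimpleGraph.Adj :=
  fun _ _ => decidable_of_iff _ toSimpleGraph_adj.symm

theorem toSimpleGraph_inv (σ : Perm V) : σ⁻¹.toSimpleGraph = σ.toSimpleGraph := by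
  ext x y
  simp only [toSimpleGraph_adj, inv_eq_iff_eq]
  tauto

theorem SameCycle.reachable_toSimpleGraph [Finite V] {σ : Perm V} {x y : V}
    (h : σ.SameCycle x y) : σ.toSimpleGraph.Reachable x y := by
  obtain ⟨i, rfl⟩ := h.exists_nat_pow_eq
  clear h
  induction i with
  | zero => exact SimpleGraph.Reachable.refl _
  | succ i ih =>
    refine ih.trans ?_
    rw [pow_succ', mul_apply]
    by_cases hfix : σ ((σ ^ i) x) = (σ ^ i) x
    · rw [hfix]
    · exact (toSimpleGraph_adj.2 ⟨Ne.symm hfix, Or.inl (Eq.refl _)⟩).reachable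

theorem mem_edgeSet_toSimpleGraph_swap_mul [DecidableEq V] {τ : Perm V} {x y : V} {e : Sym2 V}
    (hx : x ∉ e) (hy : y ∉ e) :
    e ∈ (swap x y * τ).toSimpleGraph.edgeSet ↔ e ∈ τ.toSimpleGraph.edgeSet := by
  induction e using Sym2.ind with
  | h u v =>
    simp only [Sym2.mem_iff, not_or] at hx hy
    simp only [SimpleGraph.mem_edgeSet, toSimpleGraph_adj, mul_apply, swap_apply_eq_iff,
      swap_apply_of_ne_of_ne (Ne.symm hx.1) (Ne.symm hy.1),
      swap_apply_of_ne_of_ne (Ne.symm hx.2) (Ne.symm hy.2)]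

section

variable [DecidableEq V] [Fintype V]

theorem IsCycle.apply_apply_ne {σ : Perm V} (hσ : σ.IsCycle) (h3 : 3 ≤ #σ.support) {x : V}
    (hx : x ∈ σ.support) : σ (σ x) ≠ x := by
  intro h
  rw [hσ.eq_swap_of_apply_apply_eq_self (mem_support.1 hx) h,
    card_support_swap (mem_support.1 hx).symm] at h3
  omega

-- `swap a b * τ` is `τ` with `a` inserted into its cycle just before `b`.
theorem IsCycle.swap_mul_of_apply_eq_self {τ : Perm V} (hτ : τ.IsCycle) {a b : V}
    (ha : τ a = a) (hb : τ b ≠ b) : (swap a b * τ).IsCycle := by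
  set σ := swap a b * τ
  have hτ_ne_a : ∀ z, z ≠ a → τ z ≠ a := fun z hz h => hz (τ.injective (h.trans ha.symm))
  have hσa : σ a = b := by simp [σ, ha]
  have hσ_of_ne : ∀ z, τ z ≠ a → τ z ≠ b → σ z = τ z := fun z h₁ h₂ =>
    swap_apply_of_ne_of_ne h₁ h₂
  have step : ∀ z, z ≠ a → σ.SameCycle z (τ z) := by
    intro z hz
    by_cases hzb : τ z = b
    · refine ⟨2, ?_⟩
      simp [σ, zpow_ofNat, sq, hzb, ha]
    · exact ⟨1, by simp [hσ_of_ne z (hτ_ne_a z hz) hzb]⟩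
  have orbit : ∀ i : ℕ, σ.SameCycle b ((τ ^ i) b) := by
    intro i
    induction i with
    | zero => exact SameCycle.refl _ _
    | succ i ih =>
      rw [pow_succ', mul_apply]
      refine ih.trans (step _ fun h => ?_)
      have hab : b = a :=
        (τ ^ i).injective (h.trans (pow_apply_eq_self_of_apply_eq_self ha i).symm)
      exact hb (hab ▸ ha)
  refine ⟨b, ?_, fun y hy => ?_⟩
  · rw [hσ_of_ne b (hτ_ne_a b fun h => hb (h ▸ ha)) hb]
    exact hb
  · by_cases hya : y = a
    · subst hya
      exact sameCycle_apply_right.1 (hσa ▸ SameCycle.refl _ _)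
    · have hτy : τ y ≠ y := by
        intro h
        have hyb : y ≠ b := fun hyb => hb (hyb ▸ h)
        exact hy (by simp [σ, h, swap_apply_of_ne_of_ne hya hyb])
      obtain ⟨i, rfl⟩ := (hτ.sameCycle hb hτy).exists_nat_pow_eq
      exact orbit i

open scoped Classical in
noncomputable def cyclesWithSupport (S : Finset V) : Finset (Perm V) :=
  {σ | σ.IsCycle ∧ σ.support = S}

theorem mem_cyclesWithSupport {S : Finset V} {σ : Perm V} :
    σ ∈ cyclesWithSupport S ↔ σ.IsCycle ∧ σ.support = S := by
  simp [cyclesWithSupport]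

theorem swap_mul_mem_cyclesWithSupport_erase {S : Finset V} {σ : Perm V}
    (hσ : σ ∈ cyclesWithSupport S) (hS : 3 ≤ #S) {x : V} (hx : x ∈ S) :
    swap x (σ x) * σ ∈ cyclesWithSupport (S.erase x) := by
  obtain ⟨hcyc, rfl⟩ := mem_cyclesWithSupport.1 hσ
  have hσσ := hcyc.apply_apply_ne hS hx
  exact mem_cyclesWithSupport.2 ⟨hcyc.swap_mul (mem_support.1 hx) hσσ,
    by rw [support_swap_mul_eq σ x hσσ, sdiff_singleton_eq_erase]⟩

theorem swap_mul_mem_cyclesWithSupport {S : Finset V} {τ : Perm V} {x y : V}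
    (hτ : τ ∈ cyclesWithSupport (S.erase x)) (hx : x ∈ S) (hy : y ∈ S.erase x) :
    swap x y * τ ∈ cyclesWithSupport S := by
  obtain ⟨hcyc, hsupp⟩ := mem_cyclesWithSupport.1 hτ
  have hτx : τ x = x := notMem_support.1 (hsupp ▸ notMem_erase x S)
  have hτy : τ y ≠ y := mem_support.1 (hsupp ▸ hy)
  set σ := swap x y * τ
  have hσx : σ x = y := by simp [σ, hτx]
  have hσσ : σ (σ x) ≠ x := by
    have hτyx : τ y ≠ x := fun h => ne_of_mem_erase hy (τ.injective (h.trans hτx.symm))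
    rw [hσx, mul_apply, swap_apply_of_ne_of_ne hτyx hτy]
    exact hτyx
  have h := support_swap_mul_eq σ x hσσ
  rw [hσx, swap_mul_self_mul, hsupp, sdiff_singleton_eq_erase] at h
  refine mem_cyclesWithSupport.2 ⟨hcyc.swap_mul_of_apply_eq_self hτx hτy, ?_⟩
  rw [← insert_erase hx, h, insert_erase]
  exact mem_support.2 (hσx ▸ ne_of_mem_erase hy)

-- Contraction of the arc `x ↦ y`: left multiplication by `swap x y` is an involution
-- exchanging the two sides.
theorem card_filter_apply_eq_swap_mul {S : Finset V} {x y : V} (hx : x ∈ S) (hy : y ∈ S)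
    (hxy : x ≠ y) (hS : 3 ≤ #S) (Q : Perm V → Prop) [DecidablePred Q] :
    #{σ ∈ cyclesWithSupport S | σ x = y ∧ Q σ} =
      #{τ ∈ cyclesWithSupport (S.erase x) | Q (swap x y * τ)} := by
  refine card_nbij' (swap x y * ·) (swap x y * ·) ?_ ?_ ?_ ?_
  · intro σ hσ
    simp only [coe_filter] at hσ ⊢
    obtain ⟨hσS, rfl, hQ⟩ := hσ
    exact ⟨swap_mul_mem_cyclesWithSupport_erase hσS hS hx, by rwa [swap_mul_self_mul]⟩
  · intro τ hτ
    simp only [coe_filter] at hτ ⊢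
    refine ⟨swap_mul_mem_cyclesWithSupport hτ.1 hx (mem_erase.2 ⟨hxy.symm, hy⟩), ?_, hτ.2⟩
    have hτx : τ x = x :=
      notMem_support.1 ((mem_cyclesWithSupport.1 hτ.1).2 ▸ notMem_erase x S)
    simp [hτx]
  · intro σ _
    exact swap_mul_self_mul _ _ _
  · intro τ _
    exact swap_mul_self_mul _ _ _

theorem cyclesWithSupport_pair {a b : V} (hab : a ≠ b) :
    cyclesWithSupport {a, b} = {swap a b} := by
  ext σ
  rw [mem_cyclesWithSupport, mem_singleton]
  constructor
  · rintro ⟨hcyc, hsupp⟩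
    have hmoved : ∀ z ∈ ({a, b} : Finset V), σ z ∈ ({a, b} : Finset V) ∧ σ z ≠ z :=
      fun z hz => ⟨hsupp ▸ apply_mem_support.2 (hsupp ▸ hz), mem_support.1 (hsupp ▸ hz)⟩
    have ha := hmoved a (by simp)
    have hb := hmoved b (by simp)
    simp only [mem_insert, mem_singleton] at ha hb
    have hσa : σ a = b := by tauto
    have hσb : σ b = a := by tauto
    rw [hcyc.eq_swap_of_apply_apply_eq_self ha.2 (by rw [hσa, hσb]), hσa]
  · rintro rfl
    exact ⟨isCycle_swap hab, support_swap hab⟩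

theorem card_cyclesWithSupport {S : Finset V} (hS : 2 ≤ #S) :
    #(cyclesWithSupport S) = (#S - 1)! := by
  induction hn : #S generalizing S with
  | zero => omega
  | succ m ih =>
    rcases (show m = 1 ∨ 2 ≤ m by omega) with rfl | hm
    · obtain ⟨a, b, hab, rfl⟩ := card_eq_two.1 hn
      rw [cyclesWithSupport_pair hab, card_singleton]
      rfl
    obtain ⟨a, ha⟩ : S.Nonempty := card_pos.1 (by omega)
    have hmaps : ∀ σ ∈ cyclesWithSupport S, σ a ∈ S.erase a := by
      intro σ hσ
      obtain ⟨-, rfl⟩ := mem_cyclesWithSupport.1 hσ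
      exact mem_erase.2 ⟨mem_support.1 ha, apply_mem_support.2 ha⟩
    have hfiber : ∀ b ∈ S.erase a, #{σ ∈ cyclesWithSupport S | σ a = b} = (m - 1)! := by
      intro b hb
      obtain ⟨hba, hbS⟩ := mem_erase.1 hb
      have h := card_filter_apply_eq_swap_mul ha hbS hba.symm (by omega) fun _ => True
      simp only [and_true, filter_true_of_mem fun _ _ => trivial] at h
      rw [h, ih (by rw [card_erase_of_mem ha]; omega) (by rw [card_erase_of_mem ha]; omega)]
    rw [card_eq_sum_card_fiberwise hmaps, sum_congr rfl hfiber, sum_const, card_erase_of_mem ha,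
      hn, smul_eq_mul, Nat.add_sub_cancel]
    obtain ⟨j, rfl⟩ : ∃ j, m = j + 1 := ⟨m - 1, by omega⟩
    rw [Nat.add_sub_cancel, Nat.factorial_succ]

theorem card_filter_mk_mem_edgeSet_eq_add {S : Finset V} (hS : 3 ≤ #S) {x y : V} (hxy : x ≠ y)
    (Q : Perm V → Prop) [DecidablePred Q] :
    #{σ ∈ cyclesWithSupport S | s(x, y) ∈ σ.toSimpleGraph.edgeSet ∧ Q σ} =
      #{σ ∈ cyclesWithSupport S | σ x = y ∧ Q σ} +
        #{σ ∈ cyclesWithSupport S | σ y = x ∧ Q σ} := by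
  rw [← card_union_of_disjoint, ← filter_or]
  · congr! 2 with σ
    simp only [SimpleGraph.mem_edgeSet, toSimpleGraph_adj, hxy, ne_eq, not_false_eq_true,
      true_and]
    tauto
  · refine disjoint_filter.2 fun σ hσ h₁ h₂ => ?_
    obtain ⟨hcyc, rfl⟩ := mem_cyclesWithSupport.1 hσ
    have hx : x ∈ σ.support := mem_support.2 (h₁.1 ▸ hxy.symm)
    exact hcyc.apply_apply_ne hS hx (by rw [h₁.1, h₂.1])

theorem card_filter_apply_eq_through_matching {S : Finset V} {u v : V} (hu : u ∈ S) (hv : v ∈ S)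
    (huv : u ≠ v) (hS : 3 ≤ #S) (M : Finset (Sym2 V)) (hM : ∀ f ∈ M, u ∉ f ∧ v ∉ f) :
    #{σ ∈ cyclesWithSupport S | σ u = v ∧ ∀ f ∈ M, f ∈ σ.toSimpleGraph.edgeSet} =
      #{τ ∈ cyclesWithSupport (S.erase u) | ∀ f ∈ M, f ∈ τ.toSimpleGraph.edgeSet} := by
  rw [card_filter_apply_eq_swap_mul hu hv huv hS]
  congr! 2 with τ
  exact forall₂_congr fun f hf => mem_edgeSet_toSimpleGraph_swap_mul (hM f hf).1 (hM f hf).2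

theorem card_cyclesWithSupport_through_matching {S : Finset V} (M : Finset (Sym2 V))
    (hdiag : ∀ e ∈ M, ¬ e.IsDiag) (hdisj : ∀ e ∈ M, ∀ f ∈ M, e ≠ f → ∀ v ∈ e, v ∉ f)
    (hMS : ∀ e ∈ M, ∀ v ∈ e, v ∈ S) (hcard : #M + 2 ≤ #S) :
    #{σ ∈ cyclesWithSupport S | ∀ e ∈ M, e ∈ σ.toSimpleGraph.edgeSet} =
      2 ^ #M * (#S - #M - 1)! := by
  induction M using Finset.induction_on generalizing S with
  | empty =>
    simp only [notMem_empty, IsEmpty.forall_iff, implies_true, filter_true_of_mem,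
      card_empty, pow_zero, one_mul, Nat.sub_zero]
    exact card_cyclesWithSupport (by simpa using hcard)
  | insert e M he ih =>
    rw [card_insert_of_notMem he] at hcard ⊢
    have hdisj' : ∀ f ∈ M, ∀ v ∈ e, v ∉ f := fun f hf =>
      hdisj e (mem_insert_self e M) f (mem_insert_of_mem hf) (fun h => he (h ▸ hf))
    have oriented : ∀ u v, s(u, v) = e →
        #{σ ∈ cyclesWithSupport S | σ u = v ∧ ∀ f ∈ M, f ∈ σ.toSimpleGraph.edgeSet} =
          2 ^ #M * (#S - (#M + 1) - 1)! := by
      rintro u v rfl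
      have hu : u ∈ S := hMS _ (mem_insert_self _ M) u (Sym2.mem_mk_left u v)
      have hv : v ∈ S := hMS _ (mem_insert_self _ M) v (Sym2.mem_mk_right u v)
      have huv : u ≠ v := fun h => hdiag _ (mem_insert_self _ M) (Sym2.mk_isDiag_iff.2 h)
      have hMu : ∀ f ∈ M, ∀ w ∈ f, w ∈ S.erase u := fun f hf w hw =>
        mem_erase.2 ⟨fun h => hdisj' f hf u (Sym2.mem_mk_left u v) (h ▸ hw),
          hMS f (mem_insert_of_mem hf) w hw⟩
      rw [card_filter_apply_eq_through_matching hu hv huv (by omega) M fun f hf =>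
          ⟨hdisj' f hf u (Sym2.mem_mk_left u v), hdisj' f hf v (Sym2.mem_mk_right u v)⟩,
        ih (fun f hf => hdiag f (mem_insert_of_mem hf))
          (fun f hf g hg => hdisj f (mem_insert_of_mem hf) g (mem_insert_of_mem hg)) hMu
          (by rw [card_erase_of_mem hu]; omega),
        card_erase_of_mem hu, show #S - 1 - #M - 1 = #S - (#M + 1) - 1 by omega]
    induction e using Sym2.ind with
    | h x y =>
      have hxy : x ≠ y := fun h => hdiag _ (mem_insert_self _ M) (Sym2.mk_isDiag_iff.2 h)
      simp only [forall_mem_insert]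
      rw [card_filter_mk_mem_edgeSet_eq_add (by omega) hxy, oriented x y rfl,
        oriented y x Sym2.eq_swap, ← two_mul, ← mul_assoc, ← pow_succ']

theorem two_mul_card_filter_apply_eq {S : Finset V} (hS : 3 ≤ #S) (M : Finset (Sym2 V))
    {a b : V} (hab : a ≠ b) (habM : s(a, b) ∈ M) :
    2 * #{σ ∈ cyclesWithSupport S | σ a = b ∧ ∀ e ∈ M, e ∈ σ.toSimpleGraph.edgeSet} =
      #{σ ∈ cyclesWithSupport S | ∀ e ∈ M, e ∈ σ.toSimpleGraph.edgeSet} := by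
  have hrev : #{σ ∈ cyclesWithSupport S | σ b = a ∧ ∀ e ∈ M, e ∈ σ.toSimpleGraph.edgeSet} =
      #{σ ∈ cyclesWithSupport S | σ a = b ∧ ∀ e ∈ M, e ∈ σ.toSimpleGraph.edgeSet} := by
    refine card_nbij' (·⁻¹) (·⁻¹) ?_ ?_ (fun σ _ => inv_inv σ) (fun σ _ => inv_inv σ) <;>
    · intro σ hσ
      simp only [coe_filter, Set.mem_ofPred_eq, mem_cyclesWithSupport, toSimpleGraph_inv,
        support_inv, inv_eq_iff_eq] at hσ ⊢
      exact ⟨⟨hσ.1.1.inv, hσ.1.2⟩, hσ.2.1.symm, hσ.2.2⟩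
  calc 2 * #{σ ∈ cyclesWithSupport S | σ a = b ∧ ∀ e ∈ M, e ∈ σ.toSimpleGraph.edgeSet}
      = #{σ ∈ cyclesWithSupport S | s(a, b) ∈ σ.toSimpleGraph.edgeSet ∧
          ∀ e ∈ M, e ∈ σ.toSimpleGraph.edgeSet} := by
        rw [card_filter_mk_mem_edgeSet_eq_add hS hab, hrev, two_mul]
    _ = #{σ ∈ cyclesWithSupport S | ∀ e ∈ M, e ∈ σ.toSimpleGraph.edgeSet} := by
        congr! 2 with σ
        exact ⟨fun h => h.2, fun h => ⟨h _ habM, h⟩⟩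

theorem apply_ne_of_mem_cyclesWithSupport_univ {σ : Perm V} (hσ : σ ∈ cyclesWithSupport univ)
    (x : V) : σ x ≠ x :=
  mem_support.1 ((mem_cyclesWithSupport.1 hσ).2 ▸ mem_univ x)

theorem connected_toSimpleGraph {σ : Perm V} (hσ : σ ∈ cyclesWithSupport univ) :
    σ.toSimpleGraph.Connected := by
  have hcyc := (mem_cyclesWithSupport.1 hσ).1
  have : Nonempty V := let ⟨x, _⟩ := hcyc; ⟨x⟩
  have hmoved := apply_ne_of_mem_cyclesWithSupport_univ hσ
  exact (SimpleGraph.connected_iff _).2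
    ⟨fun u v => (hcyc.sameCycle (hmoved u) (hmoved v)).reachable_toSimpleGraph, this⟩

theorem ncard_neighborSet_toSimpleGraph {σ : Perm V} (hσ : σ.IsCycle) (h3 : 3 ≤ #σ.support)
    {v : V} (hv : v ∈ σ.support) : (σ.toSimpleGraph.neighborSet v).ncard = 2 := by
  have hne : σ v ≠ σ⁻¹ v := fun h =>
    hσ.apply_apply_ne h3 hv (by rw [h]; exact σ.apply_symm_apply v)
  have hnbr : σ.toSimpleGraph.neighborSet v = {σ v, σ⁻¹ v} := by
    ext w
    simp only [SimpleGraph.mem_neighborSet, toSimpleGraph_adj, Set.mem_insert_iff,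
      Set.mem_singleton_iff]
    have hvv : σ v ≠ v := mem_support.1 hv
    constructor
    · rintro ⟨-, h | h⟩ <;> [exact Or.inl h.symm; exact Or.inr (eq_inv_iff_eq.2 h)]
    · rintro (rfl | rfl)
      · exact ⟨hvv.symm, Or.inl rfl⟩
      · exact ⟨fun h => hvv (by simpa using congrArg σ h), Or.inr (σ.apply_symm_apply v)⟩
  rw [hnbr, Set.ncard_pair hne]

theorem eq_of_toSimpleGraph_eq {σ τ : Perm V} (hσ : σ ∈ cyclesWithSupport univ)
    (h3 : 3 ≤ Fintype.card V) (hστ : σ.toSimpleGraph = τ.toSimpleGraph) {a : V}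
    (ha : σ a = τ a) : σ = τ := by
  obtain ⟨hcyc, hsupp⟩ := mem_cyclesWithSupport.1 hσ
  have hmoved := apply_ne_of_mem_cyclesWithSupport_univ hσ
  have h3' : 3 ≤ #σ.support := by rwa [hsupp, card_univ]
  -- `σ (σ x)` is adjacent to `σ x = τ x`, so it is `τ (σ x)` or `x = τ⁻¹ (σ x)`;
  -- the latter would be a 2-cycle of `σ`.
  have step : ∀ x, σ x = τ x → σ (σ x) = τ (σ x) := by
    intro x hx
    have hadj : τ.toSimpleGraph.Adj (σ x) (σ (σ x)) :=
      hστ ▸ toSimpleGraph_adj.2 ⟨(hmoved _).symm, Or.inl rfl⟩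
    rcases (toSimpleGraph_adj.1 hadj).2 with h | h
    · exact h.symm
    · exact absurd (τ.injective (h.trans hx)) (hcyc.apply_apply_ne h3' (hsupp ▸ mem_univ x))
  ext x
  obtain ⟨i, rfl⟩ := (hcyc.sameCycle (hmoved a) (hmoved x)).exists_nat_pow_eq
  induction i with
  | zero => exact ha
  | succ i ih => rw [pow_succ', mul_apply]; exact step _ ih

end

end Equiv.Perm

namespace SimpleGraph

variable {V : Type*}

theorem eq_of_le_of_ncard_neighborSet_le [Finite V] {G H : SimpleGraph V} (hle : H ≤ G)
    (h : ∀ v, (G.neighborSet v).ncard ≤ (H.neighborSet v).ncard) : H = G := by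
  refine le_antisymm hle fun u v huv => ?_
  have hnbr : H.neighborSet u = G.neighborSet u :=
    Set.eq_of_subset_of_ncard_le (fun w hw => hle hw) (h u)
  exact (hnbr ▸ huv : v ∈ H.neighborSet u)

theorem Connected.exists_isCycle_length_eq [Fintype V] [DecidableEq V] {G : SimpleGraph V}
    (hconn : G.Connected) (hdeg : ∀ v, (G.neighborSet v).ncard = 2) :
    ∃ v, ∃ p : G.Walk v v, p.IsCycle ∧ p.length = Fintype.card V := by
  obtain ⟨v⟩ := hconn.nonempty
  obtain ⟨p, hp, hverts⟩ := IsCycles.exists_cycle_toSubgraph_verts_eq_connectedComponentSupp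
    (c := G.connectedComponentMk v) (fun w _ => hdeg w) rfl
    (Set.nonempty_of_ncard_ne_zero (by rw [hdeg]; omega))
  have htail : ∀ w, w ∈ p.support.tail := by
    intro w
    have hw : w ∈ p.support := by
      rw [← Walk.mem_verts_toSubgraph, hverts]
      exact ConnectedComponent.eq.2 (hconn.preconnected w v)
    rcases p.mem_support_iff.1 hw with rfl | h
    · exact Walk.end_mem_tail_support hp.not_nil
    · exact h
  exact ⟨v, p, hp, (Walk.isHamiltonianCycle_iff_isCycle_and_support_count_tail_eq_one.2
    ⟨hp, fun w => List.count_eq_one_of_mem hp.support_nodup (htail w)⟩).length_eq⟩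

theorem exists_perm_adj_finRotate {n : ℕ} (hn : 3 ≤ n) {G : SimpleGraph (Fin n)}
    (h : ∃ v, ∃ p : G.Walk v v, p.IsCycle ∧ p.length = n) :
    ∃ e : Perm (Fin n), ∀ i, G.Adj (e i) (e (finRotate n i)) := by
  obtain ⟨f⟩ := (cycleGraph_isContained_iff (by omega)).2 h
  refine ⟨Equiv.ofBijective f (Finite.injective_iff_bijective.1 f.injective),
    fun i => f.toHom.map_adj ?_⟩
  obtain ⟨m, rfl⟩ : ∃ m, n = m + 2 := ⟨n - 2, by omega⟩
  rw [cycleGraph_adj, finRotate_apply]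
  simp

end SimpleGraph

open Equiv.Perm

theorem IsHamCycle.exists_toSimpleGraph_eq {n : ℕ} (hn : 3 ≤ n) {G : SimpleGraph (Fin n)}
    (hG : IsHamCycle G) {a b : Fin n} (hab : G.Adj a b) :
    ∃ σ ∈ cyclesWithSupport univ, σ a = b ∧ σ.toSimpleGraph = G := by
  obtain ⟨e, he⟩ := SimpleGraph.exists_perm_adj_finRotate hn
    (by simpa using hG.1.exists_isCycle_length_eq hG.2)
  set σ := e * finRotate n * e⁻¹
  have hcyc : σ.IsCycle := (isCycle_finRotate_of_le (by omega)).conj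
  have hsupp : σ.support = univ := by
    rw [support_conj, support_finRotate_of_le (by omega), map_univ_equiv]
  have hadj : ∀ x, G.Adj x (σ x) := fun x => by simpa [σ] using he (e⁻¹ x)
  have hσG : σ.toSimpleGraph = G := by
    refine SimpleGraph.eq_of_le_of_ncard_neighborSet_le (fun x y hxy => ?_) fun v => ?_
    · rcases (toSimpleGraph_adj.1 hxy).2 with rfl | rfl
      exacts [hadj x, (hadj y).symm]
    · rw [hG.2 v, ncard_neighborSet_toSimpleGraph hcyc (by simp [hsupp]; omega)
        (by simp [hsupp])]
  rcases (toSimpleGraph_adj.1 (hσG ▸ hab)).2 with hσa | hσb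
  · exact ⟨σ, mem_cyclesWithSupport.2 ⟨hcyc, hsupp⟩, hσa, hσG⟩
  · exact ⟨σ⁻¹, mem_cyclesWithSupport.2 ⟨hcyc.inv, by rw [support_inv, hsupp]⟩,
      inv_eq_iff_eq.2 hσb.symm, by rw [toSimpleGraph_inv, hσG]⟩

theorem isHamCycle_toSimpleGraph {n : ℕ} (hn : 3 ≤ n) {σ : Perm (Fin n)}
    (hσ : σ ∈ cyclesWithSupport univ) : IsHamCycle σ.toSimpleGraph := by
  obtain ⟨hcyc, hsupp⟩ := mem_cyclesWithSupport.1 hσ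
  exact ⟨connected_toSimpleGraph hσ, fun v => ncard_neighborSet_toSimpleGraph hcyc
    (by simp [hsupp]; omega) (by simp [hsupp])⟩

theorem card_isHamCycle_through_eq {n : ℕ} (hn : 3 ≤ n) (M : Finset (Sym2 (Fin n)))
    {a b : Fin n} (hab : s(a, b) ∈ M) :
    Nat.card {G : SimpleGraph (Fin n) // IsHamCycle G ∧ ∀ e ∈ M, e ∈ G.edgeSet} =
      #{σ ∈ cyclesWithSupport univ | σ a = b ∧ ∀ e ∈ M, e ∈ σ.toSimpleGraph.edgeSet} := by
  rw [← Nat.card_eq_finsetCard]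
  symm
  refine Nat.card_eq_of_bijective (fun σ => ⟨σ.1.toSimpleGraph,
    isHamCycle_toSimpleGraph hn (mem_filter.1 σ.2).1, (mem_filter.1 σ.2).2.2⟩) ⟨?_, ?_⟩
  · rintro ⟨σ, hσ⟩ ⟨τ, hτ⟩ h
    rw [mem_filter] at hσ hτ
    exact Subtype.ext (eq_of_toSimpleGraph_eq hσ.1 (by simpa using hn)
      (congrArg Subtype.val h) (hσ.2.1.trans hτ.2.1.symm))
  · rintro ⟨G, hG, hM⟩
    obtain ⟨σ, hσ, hσa, rfl⟩ := hG.exists_toSimpleGraph_eq hn (hM _ hab)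
    exact ⟨⟨σ, mem_filter.2 ⟨hσ, hσa, hM⟩⟩, rfl⟩

/-- For `n ≥ 5` and a matching `M` of size `k` (`1 ≤ k`, `2k ≤ n`) in `K_n`, the
number of Hamiltonian cycles of `K_n` containing `M` is `2^(k-1) * (n-k-1)!`. -/
theorem hamCycle_count_through_matching (n k : ℕ) (hn : 5 ≤ n)
    (hk : 1 ≤ k) (hkn : 2 * k ≤ n)
    (M : Finset (Sym2 (Fin n))) (hcard : M.card = k)
    (hEdges : ∀ e ∈ M, ¬ e.IsDiag)
    (hDisj : ∀ e ∈ M, ∀ f ∈ M, e ≠ f → ∀ v : Fin n, v ∈ e → v ∉ f) :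
    Nat.card {G : SimpleGraph (Fin n) // IsHamCycle G ∧ ∀ e ∈ M, e ∈ G.edgeSet} =
      2 ^ (k - 1) * (n - k - 1).factorial := by
  obtain ⟨e₀, he₀⟩ : M.Nonempty := card_pos.1 (by omega)
  induction e₀ using Sym2.ind with
  | h a b =>
    have hab : a ≠ b := fun h => hEdges _ he₀ (Sym2.mk_isDiag_iff.2 h)
    have hcount := card_cyclesWithSupport_through_matching M hEdges hDisj
      (fun _ _ v _ => mem_univ v) (by simp; omega)
    rw [← two_mul_card_filter_apply_eq (by simp; omega) M hab he₀, card_univ,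
      Fintype.card_fin, hcard] at hcount
    obtain ⟨j, rfl⟩ : ∃ j, k = j + 1 := ⟨k - 1, by omega⟩
    rw [pow_succ', mul_assoc] at hcount
    rw [card_isHamCycle_through_eq (by omega) M he₀]
    simpa using hcount
end
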